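/- Let G and H be oriented graphs such that H has directed girth at least k+1. If there is a homomorphism G → H, then χ_{k-dip}(G) ≤ χ_{k-dip}(H). -/

import Mathlib

/-- A directed walk of length `n` in the digraph with arc relation `A`,
given as a function `p : ℕ → V` (only indices `0..n` matter). -/
def IsDiwalk {V : Type*} (A : V → V → Prop) (n : ℕ) (p : ℕ → V) : Prop :=
  ∀ i < n, A (p i) (p (i+1))

/-- A directed path of length `n`: a directed walk whose vertices `p 0, …, p n`
are pairwise distinct. -/
def IsDipath {V : Type*} (A : V → V → Prop) (n : ℕ) (p : ℕ → V) : Prop :=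
  IsDiwalk A n p ∧ ∀ i ≤ n, ∀ j ≤ n, p i = p j → i = j

/-- A directed cycle of length `n`: a directed walk with `p 0 = p n` whose
vertices `p 0, …, p (n-1)` are pairwise distinct. -/
def IsDicycle {V : Type*} (A : V → V → Prop) (n : ℕ) (p : ℕ → V) : Prop :=
  IsDiwalk A n p ∧ p 0 = p n ∧ ∀ i < n, ∀ j < n, p i = p j → i = j

/-- A digraph is acyclic if it has no directed cycle of positive length. -/
def Acyclic {V : Type*} (A : V → V → Prop) : Prop :=
  ∀ n, 0 < n → ∀ p : ℕ → V, ¬ IsDicycle A n p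

/-- Directed girth at least `g`: no directed cycle of length less than `g`. -/
def GirthAtLeast {V : Type*} (A : V → V → Prop) (g : ℕ) : Prop :=
  ∀ n, 0 < n → n < g → ∀ p : ℕ → V, ¬ IsDicycle A n p

/-- An oriented graph: a loopless digraph with no digons. -/
def Oriented {V : Type*} (A : V → V → Prop) : Prop :=
  (∀ x, ¬ A x x) ∧ ∀ x y, A x y → ¬ A y x

/-- A `k`-dipath `t`-colouring: vertices joined by a directed path of length
at most `k` (and at least 1) receive different colours. -/
def IsDipathColoring {V : Type*} (A : V → V → Prop) (k : ℕ) {t : ℕ} (c : V → Fin t) : Prop :=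
  ∀ ℓ, 0 < ℓ → ℓ ≤ k → ∀ p : ℕ → V, IsDipath A ℓ p → c (p 0) ≠ c (p ℓ)

/-- The `k`-dipath chromatic number. -/
noncomputable def dipChrom {V : Type*} (A : V → V → Prop) (k : ℕ) : ℕ :=
  sInf {t | ∃ c : V → Fin t, IsDipathColoring A k c}

/-- A homomorphism of digraphs. -/
def DiHom {V W : Type*} (A : V → V → Prop) (B : W → W → Prop) (φ : V → W) : Prop :=
  ∀ x y, A x y → B (φ x) (φ y)

/-- The transitive tournament on `t` vertices. -/
def transTour (t : ℕ) : Fin t → Fin t → Prop := fun i j => i < j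

/-- The oriented chromatic number: the least `t` such that there is a
homomorphism to some oriented graph on `t` vertices. -/
noncomputable def oChrom {V : Type*} (A : V → V → Prop) : ℕ :=
  sInf {t | ∃ B : Fin t → Fin t → Prop, Oriented B ∧ ∃ φ : V → Fin t, DiHom A B φ}

/-- Weak distance at most `k`: a directed walk of length at most `k`
from `x` to `y` or from `y` to `x`. -/
def WeakDistLE {V : Type*} (A : V → V → Prop) (k : ℕ) (x y : V) : Prop :=
  ∃ ℓ ≤ k, ∃ p : ℕ → V, IsDiwalk A ℓ p ∧ ((p 0 = x ∧ p ℓ = y) ∨ (p 0 = y ∧ p ℓ = x))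

/-- The directed cycle of length `m`. -/
def dicycleRel (m : ℕ) : Fin m → Fin m → Prop := fun i j => j.val = (i.val + 1) % m

/-- The directed path on `m+1` vertices (length `m`). -/
def dipathRel (m : ℕ) : Fin (m+1) → Fin (m+1) → Prop := fun i j => i.val + 1 = j.val

/-!
The image under a homomorphism of a directed path of length `ℓ ≤ k` is a directed walk of
length `ℓ`. A repeated vertex on that walk would close a directed cycle of length at most `ℓ`,
which the girth of `H` forbids; so the image is again a directed path, and every `k`-dipath
colouring of `H` pulls back along the homomorphism to one of `G`.
-/

section Dipaths

variable {V W : Type*} {A : V → V → Prop} {n : ℕ} {p : ℕ → V}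

theorem IsDiwalk.shift (hp : IsDiwalk A n p) {a m : ℕ} (h : a + m ≤ n) :
    IsDiwalk A m (fun t => p (a + t)) :=
  fun t ht => hp (a + t) (by omega)

theorem IsDiwalk.map {B : W → W → Prop} {φ : V → W} (hφ : DiHom A B φ) (hp : IsDiwalk A n p) :
    IsDiwalk B n (fun t => φ (p t)) :=
  fun t ht => hφ _ _ (hp t ht)

/-- A repeated vertex inside the closed subwalk gives a strictly shorter closed subwalk. -/
theorem IsDiwalk.exists_isDicycle (hp : IsDiwalk A n p) {i d : ℕ} (hd : 0 < d) (hn : i + d ≤ n)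
    (h : p i = p (i + d)) : ∃ m, 0 < m ∧ m ≤ d ∧ ∃ q : ℕ → V, IsDicycle A m q := by
  induction d using Nat.strong_induction_on generalizing i with
  | _ d ih =>
  by_cases hinj : ∀ x < d, ∀ y < d, p (i + x) = p (i + y) → x = y
  · exact ⟨d, hd, le_rfl, _, hp.shift hn, by simpa using h, hinj⟩
  push Not at hinj
  obtain ⟨x, hx, y, hy, hxy, hne⟩ := hinj
  rcases hne.lt_or_gt with hlt | hlt
  · obtain ⟨m, hm, hmd, q, hq⟩ := ih (y - x) (by omega) (i := i + x) (by omega) (by omega)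
      (by rwa [show i + x + (y - x) = i + y by omega])
    exact ⟨m, hm, by omega, q, hq⟩
  · obtain ⟨m, hm, hmd, q, hq⟩ := ih (x - y) (by omega) (i := i + y) (by omega) (by omega)
      (by rw [show i + y + (x - y) = i + x by omega]; exact hxy.symm)
    exact ⟨m, hm, by omega, q, hq⟩

theorem IsDiwalk.isDipath (hp : IsDiwalk A n p) (hg : GirthAtLeast A (n + 1)) :
    IsDipath A n p := by
  refine ⟨hp, fun i hi j hj hij => ?_⟩
  have no_repeat : ∀ a b, a < b → b ≤ n → p a ≠ p b := fun a b hab hb hpab => by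
    obtain ⟨m, hm, hmd, q, hq⟩ :=
      hp.exists_isDicycle (i := a) (d := b - a) (by omega) (by omega)
        (by rwa [show a + (b - a) = b by omega])
    exact hg m hm (by omega) q hq
  by_contra hne
  rcases Ne.lt_or_gt hne with hlt | hlt
  · exact no_repeat i j hlt hj hij
  · exact no_repeat j i hlt hi hij.symm

end Dipaths

section Colourings

variable {V W : Type*} {A : V → V → Prop} {k t : ℕ}

theorem isDipathColoring_of_injective {c : V → Fin t} (hc : Function.Injective c) :
    IsDipathColoring A k c := fun ℓ hℓ _ p hp hcp => by
  have := hp.2 0 (Nat.zero_le ℓ) ℓ le_rfl (hc hcp)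
  omega

theorem dipChrom_le {c : V → Fin t} (hc : IsDipathColoring A k c) : dipChrom A k ≤ t :=
  Nat.sInf_le ⟨c, hc⟩

theorem exists_isDipathColoring_dipChrom [Finite V] (A : V → V → Prop) (k : ℕ) :
    ∃ c : V → Fin (dipChrom A k), IsDipathColoring A k c := by
  obtain ⟨N, ⟨e⟩⟩ := Finite.exists_equiv_fin V
  have hne : {t | ∃ c : V → Fin t, IsDipathColoring A k c}.Nonempty :=
    ⟨N, e, isDipathColoring_of_injective e.injective⟩
  exact Nat.sInf_mem hne

theorem IsDipathColoring.comp {B : W → W → Prop} {φ : V → W} {c : W → Fin t}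
    (hc : IsDipathColoring B k c) (hg : GirthAtLeast B (k + 1)) (hφ : DiHom A B φ) :
    IsDipathColoring A k (fun v => c (φ v)) := fun ℓ hℓ hℓk p hp => by
  have hg' : GirthAtLeast B (ℓ + 1) := fun m hm hmℓ => hg m hm (by omega)
  exact hc ℓ hℓ hℓk _ ((hp.1.map hφ).isDipath hg')

end Colourings

theorem stmt5_general {V W : Type*} [Fintype W]
    (A : V → V → Prop) (B : W → W → Prop) (k : ℕ)
    (hg : GirthAtLeast B (k + 1)) (φ : V → W) (hφ : DiHom A B φ) :
    dipChrom A k ≤ dipChrom B k := by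
  obtain ⟨c, hc⟩ := exists_isDipathColoring_dipChrom B k
  exact dipChrom_le (hc.comp hg hφ)

/-- if `H` has directed girth at least `k+1` and `G → H`,
then `χ_{k-dip}(G) ≤ χ_{k-dip}(H)`. -/
theorem stmt5 {V W : Type*} [Fintype V] [Fintype W]
    (A : V → V → Prop) (B : W → W → Prop) (k : ℕ)
    (horA : Oriented A) (horB : Oriented B)
    (hg : GirthAtLeast B (k + 1)) (φ : V → W) (hφ : DiHom A B φ) :
    dipChrom A k ≤ dipChrom B k :=
  stmt5_general A B k hg φ hφ
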